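/- Let C be a 2-category with tensors by the arrow category 𝟚, and F : C^op → Cat a normal pseudo-functor preserving powers by 𝟚 (i.e., F(X ⊗ 𝟚) ≅ Cat(𝟚, F(X)) naturally). Then the double category of elements el(F) has tabulators: the tabulator of a vertical morphism α : (X, x) ↛ (X, y) is given by (X ⊗ 𝟚, ᾱ), where ᾱ ∈ F(X ⊗ 𝟚) corresponds to the functor α : 𝟚 → F(X) under the preservation isomorphism, equipped with the square induced by the universal 2-morphism ζ : ζ₀ ⟹ ζ₁ : X → X ⊗ 𝟚. -/

import Mathlib

open CategoryTheory
open scoped CategoryTheory.Bicategory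

universe u

variable {C : Type u} [Bicategory.{u, u} C] [Bicategory.Strict C]

/-- A normal pseudofunctor `C^op ⟶ Cat` on a 2-category `C` (contravariant on 1-morphisms,
covariant on 2-morphisms): it preserves identities strictly and composition up to
coherent compositor isomorphisms. -/
structure NPCat (C : Type u) [Bicategory.{u, u} C] [Bicategory.Strict C] where
  obj : C → Cat.{u, u}
  map : ∀ {X Y : C}, (X ⟶ Y) → (obj Y ⥤ obj X)
  map₂ : ∀ {X Y : C} {f g : X ⟶ Y}, (f ⟶ g) → (map f ⟶ map g)
  map₂_id : ∀ {X Y : C} (f : X ⟶ Y), map₂ (𝟙 f) = 𝟙 (map f)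
  map₂_comp : ∀ {X Y : C} {f g h : X ⟶ Y} (γ : f ⟶ g) (δ : g ⟶ h),
      map₂ (γ ≫ δ) = map₂ γ ≫ map₂ δ
  map_id : ∀ X : C, map (𝟙 X) = 𝟭 (obj X)
  mapComp : ∀ {X Y Z : C} (f : X ⟶ Y) (g : Y ⟶ Z), map g ⋙ map f ≅ map (f ≫ g)
  mapComp_natural : ∀ {X Y Z : C} {f f' : X ⟶ Y} {g g' : Y ⟶ Z} (γ : f ⟶ f') (δ : g ⟶ g'),
      (CategoryTheory.Functor.whiskerRight (map₂ δ) (map f) ≫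
        CategoryTheory.Functor.whiskerLeft (map g') (map₂ γ)) ≫ (mapComp f' g').hom =
      (mapComp f g).hom ≫ map₂ (γ ▷ g ≫ f' ◁ δ)
  mapComp_assoc : ∀ {X Y Z W : C} (f : X ⟶ Y) (g : Y ⟶ Z) (h : Z ⟶ W),
      CategoryTheory.Functor.whiskerLeft (map h) (mapComp f g).hom ≫ (mapComp (f ≫ g) h).hom =
      CategoryTheory.Functor.whiskerRight (mapComp g h).hom (map f) ≫ (mapComp f (g ≫ h)).hom ≫
        eqToHom (by rw [Category.assoc])
  mapComp_id_left : ∀ {X Y : C} (f : X ⟶ Y),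
      (mapComp (𝟙 X) f).hom = eqToHom (by rw [map_id, Functor.comp_id, Category.id_comp])
  mapComp_id_right : ∀ {X Y : C} (f : X ⟶ Y),
      (mapComp f (𝟙 Y)).hom = eqToHom (by rw [map_id, Functor.id_comp, Category.comp_id])

/-- Precomposition with `c` as a functor between hom-categories of a 2-category. -/
def precompF (I : C) {X Y : C} (c : X ⟶ Y) : (Y ⟶ I) ⥤ (X ⟶ I) where
  obj h := c ≫ h
  map η := c ◁ η
  map_id h := Bicategory.whiskerLeft_id c h
  map_comp η θ := Bicategory.whiskerLeft_comp c η θ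

/-- Whiskering of `precompF` in the first variable. -/
def precompNat (I : C) {X Y : C} {c d : X ⟶ Y} (γ : c ⟶ d) :
    precompF I c ⟶ precompF I d where
  app h := γ ▷ h
  naturality _ _ η := Bicategory.whisker_exchange γ η

lemma precompF_comp (I : C) {X Y Z : C} (c : X ⟶ Y) (d : Y ⟶ Z) :
    precompF I d ⋙ precompF I c = precompF I (c ≫ d) := by
  refine CategoryTheory.Functor.ext (fun h => (Category.assoc c d h).symm) ?_
  intro h h' η
  simp only [precompF, Functor.comp_map]
  rw [Bicategory.comp_whiskerLeft]
  simp only [Bicategory.Strict.associator_eqToIso, eqToIso.hom, eqToIso.inv, Category.assoc,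
    eqToHom_trans, eqToHom_trans_assoc, eqToHom_refl, Category.comp_id, Category.id_comp]
  have key : ∀ {A : Type u} [Category.{u} A] {a b c : A} (f : a ⟶ b) (p : b = c) (q : c = b),
      f = f ≫ eqToHom p ≫ eqToHom q := by
    intros; subst_vars; simp
  exact key _ _ _

/-- A bi-representation of a normal pseudofunctor `F : C^op ⟶ Cat`: an object `I`
together with a pseudo-natural (adjoint) equivalence `C(−, I) ≃ F`. -/
structure BiRep (F : NPCat C) (I : C) where
  app : ∀ X : C, (X ⟶ I) ⥤ F.obj X
  app_equiv : ∀ X : C, (app X).IsEquivalence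
  nat : ∀ {X Y : C} (c : X ⟶ Y), app Y ⋙ F.map c ≅ precompF I c ⋙ app X
  nat_natural : ∀ {X Y : C} {c d : X ⟶ Y} (γ : c ⟶ d),
      CategoryTheory.Functor.whiskerLeft (app Y) (F.map₂ γ) ≫ (nat d).hom =
      (nat c).hom ≫ CategoryTheory.Functor.whiskerRight (precompNat I γ) (app X)
  nat_comp : ∀ {X Y Z : C} (c : X ⟶ Y) (d : Y ⟶ Z),
      (nat (c ≫ d)).hom =
      CategoryTheory.Functor.whiskerLeft (app Z) (F.mapComp c d).inv ≫
        CategoryTheory.Functor.whiskerRight (nat d).hom (F.map c) ≫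
        CategoryTheory.Functor.whiskerLeft (precompF I d) (nat c).hom ≫
        eqToHom (congrArg (fun K => K ⋙ app X) (precompF_comp I c d))

/-- `(T, z₀, z₁, z)` exhibits `T` as a tensor of `X` by the walking arrow `𝟚` in a
2-category: for every object `Z`, precomposition with the universal 2-morphism
`z : z₀ ⟶ z₁` induces an isomorphism between the category of morphisms `T ⟶ Z` and the
arrow category of `X ⟶ Z` (expressed elementwise on objects and morphisms). -/
def IsTensorBy2 (C : Type u) [Bicategory.{u, u} C] [Bicategory.Strict C]
    {X T : C} (z₀ z₁ : X ⟶ T) (z : z₀ ⟶ z₁) : Prop :=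
  (∀ (Z : C) (k₀ k₁ : X ⟶ Z) (κ : k₀ ⟶ k₁),
    ∃! s : T ⟶ Z, ∃ (e₀ : z₀ ≫ s = k₀) (e₁ : z₁ ≫ s = k₁),
      κ = eqToHom e₀.symm ≫ z ▷ s ≫ eqToHom e₁) ∧
  (∀ (Z : C) (s s' : T ⟶ Z) (θ₀ : z₀ ≫ s ⟶ z₀ ≫ s') (θ₁ : z₁ ≫ s ⟶ z₁ ≫ s'),
    z ▷ s ≫ θ₁ = θ₀ ≫ z ▷ s' →
    ∃! θ : s ⟶ s', z₀ ◁ θ = θ₀ ∧ z₁ ◁ θ = θ₁)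

/-- The canonical comparison functor `F(T) ⥤ Cat(𝟚, F(X))` (the codomain realised as the
arrow category of `F(X)`) induced by the universal 2-morphism `z : z₀ ⟶ z₁` of a tensor
by `𝟚`. -/
def cmpFun (F : NPCat C) {X T : C} (z₀ z₁ : X ⟶ T) (z : z₀ ⟶ z₁) :
    F.obj T ⥤ Arrow (F.obj X) where
  obj a := Arrow.mk ((F.map₂ z).app a)
  map {a b} m := Arrow.homMk (u := (F.map z₀).map m) (v := (F.map z₁).map m) ((F.map₂ z).naturality m)
  map_id a := by ext <;> simp
  map_comp m m' := by ext <;> simp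

/-- `F` preserves powers by `𝟚` at a tensor `(T, z₀, z₁, z)`: the canonical comparison
functor is an isomorphism of categories. -/
def PreservesPowerBy2 (F : NPCat C) {X T : C} (z₀ z₁ : X ⟶ T) (z : z₀ ⟶ z₁) : Prop :=
  ∃ E : Arrow (F.obj X) ⥤ F.obj T,
    cmpFun F z₀ z₁ z ⋙ E = 𝟭 (F.obj T) ∧ E ⋙ cmpFun F z₀ z₁ z = 𝟭 (Arrow (F.obj X))

/-!
STATEMENT 17: Let `C` be a 2-category with tensors by `𝟚` and `F : C^op ⟶ Cat` a normal
pseudofunctor preserving powers by `𝟚`.  Then the double category of elements `el(F)` has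
tabulators: the tabulator of a vertical morphism `α : (X, x) ↛ (X, y)` is
`(X ⊗ 𝟚, ᾱ)` — where `ᾱ ∈ F(X ⊗ 𝟚)` corresponds to `α : 𝟚 → F(X)` under the
preservation isomorphism — equipped with the square induced by the universal 2-morphism
`ζ : ζ₀ ⟶ ζ₁ : X → X ⊗ 𝟚`.  Both the one- and the two-dimensional universal properties
of tabulators in `el(F)` are spelled out explicitly in terms of the data of `el(F)`.
-/

/-!
Since `F` preserves the power by `𝟚`, the comparison functor `F(X ⊗ 𝟚) ⥤ Arrow (F X)` is an
equivalence: a morphism of `F(X ⊗ 𝟚)` is determined by its images under `F ζ₀` and `F ζ₁`, and a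
pair of isomorphisms commuting with `F ζ` lifts to an isomorphism. The tensor property factors the
2-cell of a square of `el(F)` into `α` (or of a compatible pair of such squares) through `ζ`; the
fibre components of the factorization are then lifted, or checked, after applying `F ζ₀` and
`F ζ₁`, where they are the given data transported along the compositors of `F`. This works for any
object carrying a square `ψ₀ ≫ F ζ = α ≫ ψ₁`, such as `ᾱ`.
-/

namespace NPCat

variable (F : NPCat C)

lemma mapComp_hom_app_map₂_whiskerRight {X Y Z : C} {f f' : X ⟶ Y} (γ : f ⟶ f') (g : Y ⟶ Z)
    (w : F.obj Z) :
    (F.map₂ γ).app ((F.map g).obj w) ≫ (F.mapComp f' g).hom.app w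
      = (F.mapComp f g).hom.app w ≫ (F.map₂ (γ ▷ g)).app w := by
  simpa [F.map₂_id] using congrArg (NatTrans.app · w) (F.mapComp_natural γ (𝟙 g))

lemma mapComp_hom_app_map₂_whiskerLeft {X Y Z : C} (f : X ⟶ Y) {g g' : Y ⟶ Z} (δ : g ⟶ g')
    (w : F.obj Z) :
    (F.map f).map ((F.map₂ δ).app w) ≫ (F.mapComp f g').hom.app w
      = (F.mapComp f g).hom.app w ≫ (F.map₂ (f ◁ δ)).app w := by
  simpa [F.map₂_id] using congrArg (NatTrans.app · w) (F.mapComp_natural (𝟙 f) δ)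

lemma map_map_comp_map_map₂_app_comp_mapComp {X Y Z : C} (f : X ⟶ Y) {g g' : Y ⟶ Z}
    (δ : g' ⟶ g) {w w' : F.obj Z} (m : w' ⟶ w) :
    (F.map f).map ((F.map g').map m) ≫ (F.map f).map ((F.map₂ δ).app w) ≫
      (F.mapComp f g).hom.app w
      = (F.mapComp f g').hom.app w' ≫ (F.map (f ≫ g')).map m ≫ (F.map₂ (f ◁ δ)).app w := by
  rw [mapComp_hom_app_map₂_whiskerLeft]
  exact (F.mapComp f g').hom.naturality_assoc m _

end NPCat

section

variable {F : NPCat C} {X T : C} {z₀ z₁ : X ⟶ T} {z : z₀ ⟶ z₁}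

lemma cmpFun_isEquivalence {E : Arrow (F.obj X) ⥤ F.obj T}
    (hE₁ : cmpFun F z₀ z₁ z ⋙ E = 𝟭 (F.obj T)) (hE₂ : E ⋙ cmpFun F z₀ z₁ z = 𝟭 _) :
    (cmpFun F z₀ z₁ z).IsEquivalence :=
  (CategoryTheory.Equivalence.mk _ E (eqToIso hE₁.symm) (eqToIso hE₂)).isEquivalence_functor

lemma cmpFun_hom_ext [(cmpFun F z₀ z₁ z).Faithful] {a b : F.obj T} {m m' : a ⟶ b}
    (h₀ : (F.map z₀).map m = (F.map z₀).map m') (h₁ : (F.map z₁).map m = (F.map z₁).map m') :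
    m = m' :=
  (cmpFun F z₀ z₁ z).map_injective (Arrow.hom_ext _ _ h₀ h₁)

lemma exists_iso_map_eq_of_cmpFun [(cmpFun F z₀ z₁ z).Full] [(cmpFun F z₀ z₁ z).Faithful]
    {a b : F.obj T} (u₀ : (F.map z₀).obj a ≅ (F.map z₀).obj b)
    (u₁ : (F.map z₁).obj a ≅ (F.map z₁).obj b)
    (hu : u₀.hom ≫ (F.map₂ z).app b = (F.map₂ z).app a ≫ u₁.hom) :
    ∃ χ : a ≅ b, (F.map z₀).map χ.hom = u₀.hom ∧ (F.map z₁).map χ.hom = u₁.hom := by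
  let k : (cmpFun F z₀ z₁ z).obj a ≅ (cmpFun F z₀ z₁ z).obj b := Arrow.isoMk u₀ u₁ hu
  have hk := (cmpFun F z₀ z₁ z).map_preimage k.hom
  exact ⟨(cmpFun F z₀ z₁ z).preimageIso k, congrArg CommaMorphism.left hk,
    congrArg CommaMorphism.right hk⟩

end

namespace IsTensorBy2

variable {F : NPCat C} {X T : C} {z₀ z₁ : X ⟶ T} {z : z₀ ⟶ z₁}
  {x y : F.obj X} {a : F.obj T} {ψ₀ : x ≅ (F.map z₀).obj a} {ψ₁ : y ≅ (F.map z₁).obj a}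

theorem existsUnique_el_lift [(cmpFun F z₀ z₁ z).Full] [(cmpFun F z₀ z₁ z).Faithful]
    (htens : IsTensorBy2 C z₀ z₁ z) {α : x ⟶ y} (hsq : ψ₀.hom ≫ (F.map₂ z).app a = α ≫ ψ₁.hom)
    {W : C} {w : F.obj W} {c d : X ⟶ W} {ψ : x ≅ (F.map c).obj w} {φ : y ≅ (F.map d).obj w}
    {γ : c ⟶ d} (hsq' : ψ.hom ≫ (F.map₂ γ).app w = α ≫ φ.hom) :
    ∃! t : Σ' s : T ⟶ W, a ≅ (F.map s).obj w,
      ∃ (e₀ : z₀ ≫ t.1 = c) (e₁ : z₁ ≫ t.1 = d),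
        γ = eqToHom e₀.symm ≫ z ▷ t.1 ≫ eqToHom e₁ ∧
        ψ.hom = ψ₀.hom ≫ (F.map z₀).map t.2.hom ≫
          (F.mapComp z₀ t.1).hom.app w ≫ eqToHom (by rw [e₀]) ∧
        φ.hom = ψ₁.hom ≫ (F.map z₁).map t.2.hom ≫
          (F.mapComp z₁ t.1).hom.app w ≫ eqToHom (by rw [e₁]) := by
  obtain ⟨s, ⟨rfl, rfl, rfl⟩, hs⟩ := htens.1 W c d γ
  simp only [eqToHom_refl, Category.id_comp, Category.comp_id] at hsq'
  have hu : (ψ₀.symm ≪≫ ψ ≪≫ (F.mapComp z₀ s).symm.app w).hom ≫ (F.map₂ z).app ((F.map s).obj w)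
      = (F.map₂ z).app a ≫ (ψ₁.symm ≪≫ φ ≪≫ (F.mapComp z₁ s).symm.app w).hom := by
    have hz : (F.map₂ z).app a ≫ ψ₁.inv = ψ₀.inv ≫ α := by
      rw [Iso.comp_inv_eq, Category.assoc, ← hsq, Iso.inv_hom_id_assoc]
    rw [← cancel_mono ((F.mapComp z₁ s).hom.app w)]
    simpa [F.mapComp_hom_app_map₂_whiskerRight, reassoc_of% hz] using hsq'
  obtain ⟨χ, hχ₀, hχ₁⟩ := exists_iso_map_eq_of_cmpFun _ _ hu
  refine ⟨⟨s, χ⟩, ⟨rfl, rfl, by simp, by simp [hχ₀], by simp [hχ₁]⟩, ?_⟩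
  rintro ⟨s', χ'⟩ ⟨e₀, e₁, hγ, hψ, hφ⟩
  obtain rfl := hs s' ⟨e₀, e₁, hγ⟩
  dsimp only at hψ hφ
  congr
  ext
  exact cmpFun_hom_ext (z := z) (by simp [hχ₀, hψ]) (by simp [hχ₁, hφ])

theorem existsUnique_el_liftSquare [(cmpFun F z₀ z₁ z).Faithful] (htens : IsTensorBy2 C z₀ z₁ z)
    {W : C} {w w' : F.obj W} {m : w' ⟶ w}
    {c d : X ⟶ W} {ψ : x ≅ (F.map c).obj w} {φ : y ≅ (F.map d).obj w} {γ : c ⟶ d}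
    {c' d' : X ⟶ W} {ψ' : x ≅ (F.map c').obj w'} {φ' : y ≅ (F.map d').obj w'} {γ' : c' ⟶ d'}
    {t₀ : c' ⟶ c} {t₁ : d' ⟶ d}
    (hθ₀ : ψ'.hom ≫ (F.map c').map m ≫ (F.map₂ t₀).app w = ψ.hom)
    (hθ₁ : φ'.hom ≫ (F.map d').map m ≫ (F.map₂ t₁).app w = φ.hom)
    (hpaste : t₀ ≫ γ = γ' ≫ t₁)
    {s : T ⟶ W} {χ : a ≅ (F.map s).obj w} {s' : T ⟶ W} {χ' : a ≅ (F.map s').obj w'}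
    {e₀ : z₀ ≫ s = c} {e₁ : z₁ ≫ s = d} {e₀' : z₀ ≫ s' = c'} {e₁' : z₁ ≫ s' = d'}
    (hγ : γ = eqToHom e₀.symm ≫ z ▷ s ≫ eqToHom e₁)
    (hψ : ψ.hom = ψ₀.hom ≫ (F.map z₀).map χ.hom ≫
      (F.mapComp z₀ s).hom.app w ≫ eqToHom (by rw [e₀]))
    (hφ : φ.hom = ψ₁.hom ≫ (F.map z₁).map χ.hom ≫
      (F.mapComp z₁ s).hom.app w ≫ eqToHom (by rw [e₁]))
    (hγ' : γ' = eqToHom e₀'.symm ≫ z ▷ s' ≫ eqToHom e₁')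
    (hψ' : ψ'.hom = ψ₀.hom ≫ (F.map z₀).map χ'.hom ≫
      (F.mapComp z₀ s').hom.app w' ≫ eqToHom (by rw [e₀']))
    (hφ' : φ'.hom = ψ₁.hom ≫ (F.map z₁).map χ'.hom ≫
      (F.mapComp z₁ s').hom.app w' ≫ eqToHom (by rw [e₁'])) :
    ∃! th : s' ⟶ s,
      (χ'.hom ≫ (F.map s').map m ≫ (F.map₂ th).app w = χ.hom) ∧
      t₀ = eqToHom e₀'.symm ≫ z₀ ◁ th ≫ eqToHom e₀ ∧
      t₁ = eqToHom e₁'.symm ≫ z₁ ◁ th ≫ eqToHom e₁ := by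
  subst e₀ e₁ e₀' e₁' hγ hγ'
  simp only [eqToHom_refl, Category.id_comp, Category.comp_id] at hψ hφ hψ' hφ' hpaste ⊢
  obtain ⟨θ, ⟨rfl, rfl⟩, hθ⟩ := htens.2 W s' s t₀ t₁ hpaste.symm
  refine ⟨θ, ⟨cmpFun_hom_ext (z := z) ?_ ?_, rfl, rfl⟩,
    fun θ' h => hθ θ' ⟨h.2.1.symm, h.2.2.symm⟩⟩
  · rw [← cancel_epi ψ₀.hom, ← cancel_mono ((F.mapComp z₀ s).hom.app w),
      Functor.map_comp, Functor.map_comp]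
    simp only [Category.assoc, F.map_map_comp_map_map₂_app_comp_mapComp]
    rw [← hψ, ← hθ₀, hψ']
    simp only [Category.assoc]
  · rw [← cancel_epi ψ₁.hom, ← cancel_mono ((F.mapComp z₁ s).hom.app w),
      Functor.map_comp, Functor.map_comp]
    simp only [Category.assoc, F.map_map_comp_map_map₂_app_comp_mapComp]
    rw [← hφ, ← hθ₁, hφ']
    simp only [Category.assoc]

end IsTensorBy2

theorem stmt17 (F : NPCat C)
    -- tensors by `𝟚` in `C`:
    (T : C → C) (z₀ z₁ : ∀ X : C, X ⟶ T X) (z : ∀ X : C, z₀ X ⟶ z₁ X)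
    (htens : ∀ X : C, IsTensorBy2 C (z₀ X) (z₁ X) (z X))
    -- `F` preserves the corresponding powers by `𝟚`, via a strict inverse `E X` of the
    -- canonical comparison functor:
    (E : ∀ X : C, Arrow (F.obj X) ⥤ F.obj (T X))
    (hE : ∀ X : C, cmpFun F (z₀ X) (z₁ X) (z X) ⋙ E X = 𝟭 (F.obj (T X)) ∧
      E X ⋙ cmpFun F (z₀ X) (z₁ X) (z X) = 𝟭 (Arrow (F.obj X)))
    -- a vertical morphism `α : (X, x) ↛ (X, y)` of `el(F)`:
    (X : C) (x y : F.obj X) (α : x ⟶ y) :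
    -- the tabulator object `(T X, ᾱ)` with `ᾱ = E X (Arrow.mk α)` carries a universal
    -- square: a horizontal top `(z₀ X, ψ₀)`, a horizontal bottom `(z₁ X, ψ₁)` and the
    -- filler `z X`, satisfying the square condition of `el(F)` and the one- and
    -- two-dimensional universal properties of a tabulator:
    ∃ (ψ₀ : x ≅ (F.map (z₀ X)).obj ((E X).obj (Arrow.mk α)))
      (ψ₁ : y ≅ (F.map (z₁ X)).obj ((E X).obj (Arrow.mk α))),
      -- `(z X, ψ₀, ψ₁)` is a square of `el(F)` from the vertical identity of
      -- `(T X, ᾱ)` to `α`: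
      (ψ₀.hom ≫ (F.map₂ (z X)).app ((E X).obj (Arrow.mk α)) = α ≫ ψ₁.hom) ∧
      -- 1-dimensional universal property: every square of `el(F)` from a vertical
      -- identity to `α` factors uniquely through it via a horizontal morphism of
      -- `el(F)` into `(T X, ᾱ)`:
      (∀ (W : C) (w : F.obj W) (c d : X ⟶ W)
        (ψ : x ≅ (F.map c).obj w) (φ : y ≅ (F.map d).obj w) (γ : c ⟶ d),
        ψ.hom ≫ (F.map₂ γ).app w = α ≫ φ.hom →
        ∃! t : Σ' s : T X ⟶ W, (E X).obj (Arrow.mk α) ≅ (F.map s).obj w,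
          ∃ (e₀ : z₀ X ≫ t.1 = c) (e₁ : z₁ X ≫ t.1 = d),
            γ = eqToHom e₀.symm ≫ z X ▷ t.1 ≫ eqToHom e₁ ∧
            ψ.hom = ψ₀.hom ≫ (F.map (z₀ X)).map t.2.hom ≫
              (F.mapComp (z₀ X) t.1).hom.app w ≫ eqToHom (by rw [e₀]) ∧
            φ.hom = ψ₁.hom ≫ (F.map (z₁ X)).map t.2.hom ≫
              (F.mapComp (z₁ X) t.1).hom.app w ≫ eqToHom (by rw [e₁])) ∧
      -- 2-dimensional universal property: compatible pairs of squares into the top and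
      -- bottom of `α` correspond uniquely to squares into the factorizing morphisms:
      (∀ (W : C) (w w' : F.obj W) (m : w' ⟶ w)
        (c d : X ⟶ W) (ψ : x ≅ (F.map c).obj w) (φ : y ≅ (F.map d).obj w) (γ : c ⟶ d)
        (c' d' : X ⟶ W) (ψ' : x ≅ (F.map c').obj w') (φ' : y ≅ (F.map d').obj w')
        (γ' : c' ⟶ d')
        (t₀ : c' ⟶ c) (t₁ : d' ⟶ d),
        ψ.hom ≫ (F.map₂ γ).app w = α ≫ φ.hom →
        ψ'.hom ≫ (F.map₂ γ').app w' = α ≫ φ'.hom →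
        -- `t₀` and `t₁` are squares `θ₀`, `θ₁` of `el(F)`:
        ψ'.hom ≫ (F.map c').map m ≫ (F.map₂ t₀).app w = ψ.hom →
        φ'.hom ≫ (F.map d').map m ≫ (F.map₂ t₁).app w = φ.hom →
        -- pasting compatibility:
        t₀ ≫ γ = γ' ≫ t₁ →
        -- given the factorizations `t`, `t'` of the two squares through the tabulator:
        ∀ (s : T X ⟶ W) (χ : (E X).obj (Arrow.mk α) ≅ (F.map s).obj w)
          (s' : T X ⟶ W) (χ' : (E X).obj (Arrow.mk α) ≅ (F.map s').obj w')
          (e₀ : z₀ X ≫ s = c) (e₁ : z₁ X ≫ s = d)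
          (e₀' : z₀ X ≫ s' = c') (e₁' : z₁ X ≫ s' = d'),
          γ = eqToHom e₀.symm ≫ z X ▷ s ≫ eqToHom e₁ →
          ψ.hom = ψ₀.hom ≫ (F.map (z₀ X)).map χ.hom ≫
            (F.mapComp (z₀ X) s).hom.app w ≫ eqToHom (by rw [e₀]) →
          φ.hom = ψ₁.hom ≫ (F.map (z₁ X)).map χ.hom ≫
            (F.mapComp (z₁ X) s).hom.app w ≫ eqToHom (by rw [e₁]) →
          γ' = eqToHom e₀'.symm ≫ z X ▷ s' ≫ eqToHom e₁' →
          ψ'.hom = ψ₀.hom ≫ (F.map (z₀ X)).map χ'.hom ≫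
            (F.mapComp (z₀ X) s').hom.app w' ≫ eqToHom (by rw [e₀']) →
          φ'.hom = ψ₁.hom ≫ (F.map (z₁ X)).map χ'.hom ≫
            (F.mapComp (z₁ X) s').hom.app w' ≫ eqToHom (by rw [e₁']) →
          -- there is a unique square of `el(F)` from `(s', χ')` to `(s, χ)` over `m`
          -- whiskering to `θ₀` and `θ₁`:
          ∃! th : s' ⟶ s,
            (χ'.hom ≫ (F.map s').map m ≫ (F.map₂ th).app w = χ.hom) ∧
            t₀ = eqToHom e₀'.symm ≫ z₀ X ◁ th ≫ eqToHom e₀ ∧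
            t₁ = eqToHom e₁'.symm ≫ z₁ X ◁ th ≫ eqToHom e₁) := by
  obtain ⟨hE₁, hE₂⟩ := hE X
  have := cmpFun_isEquivalence hE₁ hE₂
  let e : Arrow.mk α ≅ (cmpFun F (z₀ X) (z₁ X) (z X)).obj ((E X).obj (Arrow.mk α)) :=
    eqToIso (Functor.congr_obj hE₂ _).symm
  have hsq : (Comma.leftIso e).hom ≫ (F.map₂ (z X)).app ((E X).obj (Arrow.mk α))
      = α ≫ (Comma.rightIso e).hom := Arrow.w e.hom
  refine ⟨Comma.leftIso e, Comma.rightIso e, hsq,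
    fun _ _ _ _ _ _ _ => (htens X).existsUnique_el_lift hsq, ?_⟩
  intro _ _ _ _ _ _ _ _ _ _ _ _ _ _ _ _ _ _ hθ₀ hθ₁ hpaste _ _ _ _ e₀ _ e₀' _
  exact (htens X).existsUnique_el_liftSquare (e₀ := e₀) (e₀' := e₀') hθ₀ hθ₁ hpaste
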